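/- arXiv:2304.12756 — 2 statements merged into one kernel-verified Lean document; each statement's English description precedes it below -/
import Mathlib

section
/- Let m ≥ 3, and let dA, dB, duA, doB, a1', a2' be positive integers with 2·dA - duA > 0, m·dB - doB > 0, (m-1)·dB - doB > 0, and (m-2)·dA·dB - dA·doB - (m-1)·duA·dB + duA·doB = -1. Set α₁ = a1'/(2·dA - duA), α₂ = (dB + a2')/(m·dB - doB), α₁' = a1'/dA, α₂' = a2'/((m-1)·dB - doB) (as rational numbers). If α₁' + α₂' < 1, then α₁ + α₂ < 1. -/
/-- Lemma 4.3(2), arithmetic form: if `(C'·D'♯) < 1` then `(C·D♯) < 1`. -/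
theorem stmt5 (m dA dB duA doB a1' a2' : ℤ)
    (hm : 3 ≤ m) (hdA : 0 < dA) (hdB : 0 < dB) (hduA : 0 < duA) (hdoB : 0 < doB)
    (ha1' : 0 < a1') (ha2' : 0 < a2')
    (h2 : 0 < 2 * dA - duA) (h3 : 0 < m * dB - doB) (h4 : 0 < (m - 1) * dB - doB)
    (hdet : (m - 2) * dA * dB - dA * doB - (m - 1) * duA * dB + duA * doB = -1)
    (hlt : (a1' : ℚ) / dA + (a2' : ℚ) / ((m - 1) * dB - doB) < 1) :
    (a1' : ℚ) / (2 * dA - duA) + ((dB : ℚ) + a2') / (m * dB - doB) < 1 := by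
  have hdAq : (0:ℚ) < (dA:ℚ) := by exact_mod_cast hdA
  have hRq : (0:ℚ) < ((m:ℚ) - 1) * dB - doB := by
    have : ((0:ℤ):ℚ) < (((m - 1) * dB - doB : ℤ) : ℚ) := by exact_mod_cast h4
    push_cast at this; linarith
  have hPq : (0:ℚ) < 2 * (dA:ℚ) - duA := by
    have : ((0:ℤ):ℚ) < ((2 * dA - duA : ℤ) : ℚ) := by exact_mod_cast h2
    push_cast at this; linarith
  have hQq : (0:ℚ) < (m:ℚ) * dB - doB := by
    have : ((0:ℤ):ℚ) < ((m * dB - doB : ℤ) : ℚ) := by exact_mod_cast h3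
    push_cast at this; linarith
  -- integer form of hypothesis
  have hKq : (a1':ℚ) * (((m:ℚ) - 1) * dB - doB) + (a2':ℚ) * dA
      < dA * (((m:ℚ) - 1) * dB - doB) := by
    rw [div_add_div _ _ hdAq.ne' hRq.ne', div_lt_one (by positivity)] at hlt
    nlinarith [hlt]
  have hK : a1' * ((m - 1) * dB - doB) + a2' * dA + 1 ≤ dA * ((m - 1) * dB - doB) := by
    have h5 : a1' * ((m - 1) * dB - doB) + a2' * dA < dA * ((m - 1) * dB - doB) := by
      exact_mod_cast hKq
    omega
  have hPR : (2 * dA - duA) * ((m - 1) * dB - doB)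
      = dA * ((m - 1) * dB - doB) + dA * dB - 1 := by linear_combination hdet
  -- integer goal
  have hG : a1' * (m * dB - doB) + (2 * dA - duA) * (dB + a2')
      < (2 * dA - duA) * (m * dB - doB) := by
    nlinarith [hK, hPR, h4, h3, ha2', hdB, mul_le_mul_of_nonneg_left hK h4.le,
      mul_le_mul_of_nonneg_left hK h3.le, mul_pos h4 h3]
  rw [div_add_div _ _ hPq.ne' hQq.ne', div_lt_one (by positivity)]
  exact_mod_cast hG
end

section
/- Let x₁, x₂, …, x₁₁ be positive integers. Define a = -½(2x₁ - x₇)², b = -x₂² - Σ_{i=2}^{6}(x_i - x_{i+1})², c = -½(x₇ - 2x₈)², d = -(x₈ - x₁₀)² - ½(2x₉ - x₁₀)² - ½(2x₁₁ - x₁₀)². Then a + b + c + d + x₈ ≤ -2. -/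
lemma consec13 (n : ℤ) : 0 ≤ n * (n - 1) := by
  rcases le_or_gt 1 n with h | h
  · exact mul_nonneg (by omega) (by omega)
  · have : 0 ≤ (-n) * (-(n - 1)) := mul_nonneg (by omega) (by omega)
    nlinarith [this]

lemma odd_sq13 (n : ℤ) : 1 ≤ (2 * n - 1) ^ 2 := by nlinarith [consec13 n]

lemma le_sq13 (a : ℤ) : a ≤ a ^ 2 := by nlinarith [consec13 a]

lemma sq_pos13 (a : ℤ) (h : a ≠ 0) : 1 ≤ a ^ 2 := by
  rcases h.lt_or_gt with h | h <;> nlinarith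

set_option maxHeartbeats 2000000 in
/-- Main claim of the Appendix: for positive integers `x₁,…,x₁₁`,
`a + b + c + d + x₈ ≤ -2`. -/
theorem stmt13 (x1 x2 x3 x4 x5 x6 x7 x8 x9 x10 x11 : ℤ)
    (h1 : 0 < x1) (h2 : 0 < x2) (h3 : 0 < x3) (h4 : 0 < x4) (h5 : 0 < x5)
    (h6 : 0 < x6) (h7 : 0 < x7) (h8 : 0 < x8) (h9 : 0 < x9) (h10 : 0 < x10)
    (h11 : 0 < x11) :
    -(1 / 2 : ℚ) * ((2 * x1 - x7 : ℤ) : ℚ) ^ 2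
      + (-((x2 : ℚ)) ^ 2 - (((x2 - x3 : ℤ) : ℚ) ^ 2 + ((x3 - x4 : ℤ) : ℚ) ^ 2
          + ((x4 - x5 : ℤ) : ℚ) ^ 2 + ((x5 - x6 : ℤ) : ℚ) ^ 2 + ((x6 - x7 : ℤ) : ℚ) ^ 2))
      + (-(1 / 2 : ℚ) * ((x7 - 2 * x8 : ℤ) : ℚ) ^ 2)
      + (-((x8 - x10 : ℤ) : ℚ) ^ 2 - (1 / 2 : ℚ) * ((2 * x9 - x10 : ℤ) : ℚ) ^ 2
          - (1 / 2 : ℚ) * ((2 * x11 - x10 : ℤ) : ℚ) ^ 2)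
      + (x8 : ℚ) ≤ -2 := by
  have key : (2 * x8 + 4 : ℤ) ≤ (2 * x1 - x7) ^ 2
      + 2 * (x2 ^ 2 + (x2 - x3) ^ 2 + (x3 - x4) ^ 2 + (x4 - x5) ^ 2
          + (x5 - x6) ^ 2 + (x6 - x7) ^ 2)
      + (x7 - 2 * x8) ^ 2 + 2 * (x8 - x10) ^ 2 + (2 * x9 - x10) ^ 2
      + (2 * x11 - x10) ^ 2 := by
    have hS : x7 ≤ x2 ^ 2 + (x2 - x3) ^ 2 + (x3 - x4) ^ 2 + (x4 - x5) ^ 2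
        + (x5 - x6) ^ 2 + (x6 - x7) ^ 2 := by
      nlinarith [le_sq13 x2, le_sq13 (x3 - x2), le_sq13 (x4 - x3), le_sq13 (x5 - x4),
        le_sq13 (x6 - x5), le_sq13 (x7 - x6)]
    rcases (show x8 = 1 ∨ x8 = 2 ∨ x8 = 3 ∨ 4 ≤ x8 by omega) with rfl | rfl | rfl | h8'
    · -- x8 = 1
      have hblock : 2 ≤ 2 * ((1 : ℤ) - x10) ^ 2 + (2 * x9 - x10) ^ 2 + (2 * x11 - x10) ^ 2 := by
        rcases eq_or_ne x10 1 with rfl | hne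
        · nlinarith [odd_sq13 x9, odd_sq13 x11]
        · nlinarith [sq_pos13 (1 - x10) (by omega), sq_nonneg (2 * x9 - x10),
            sq_nonneg (2 * x11 - x10)]
      rcases Int.even_or_odd x7 with ⟨k, hk⟩ | ⟨k, hk⟩
      · nlinarith [hS, hblock, odd_sq13 k, sq_nonneg (2 * x1 - x7)]
      · nlinarith [hS, hblock, odd_sq13 (x1 - k), sq_nonneg (x7 - 1)]
    · -- x8 = 2
      rcases eq_or_ne x10 2 with rfl | hne
      · rcases Int.even_or_odd x7 with ⟨k, hk⟩ | ⟨k, hk⟩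
        · nlinarith [hS, consec13 (k - 1), sq_nonneg (2 * x1 - x7),
            sq_nonneg (2 * x9 - 2), sq_nonneg (2 * x11 - 2)]
        · nlinarith [hS, odd_sq13 (x1 - k), sq_nonneg (x7 - 3),
            sq_nonneg (2 * x9 - 2), sq_nonneg (2 * x11 - 2)]
      · nlinarith [hS, sq_pos13 (2 - x10) (by omega), sq_nonneg (x7 - 3),
          sq_nonneg (2 * x1 - x7), sq_nonneg (2 * x9 - x10), sq_nonneg (2 * x11 - x10)]
    · -- x8 = 3
      have hC : x7 ^ 2 ≤ 6 * (x2 ^ 2 + (x2 - x3) ^ 2 + (x3 - x4) ^ 2 + (x4 - x5) ^ 2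
          + (x5 - x6) ^ 2 + (x6 - x7) ^ 2) := by
        nlinarith [sq_nonneg (x2 - (x3 - x2)), sq_nonneg (x2 - (x4 - x3)),
          sq_nonneg (x2 - (x5 - x4)), sq_nonneg (x2 - (x6 - x5)), sq_nonneg (x2 - (x7 - x6)),
          sq_nonneg ((x3 - x2) - (x4 - x3)), sq_nonneg ((x3 - x2) - (x5 - x4)),
          sq_nonneg ((x3 - x2) - (x6 - x5)), sq_nonneg ((x3 - x2) - (x7 - x6)),
          sq_nonneg ((x4 - x3) - (x5 - x4)), sq_nonneg ((x4 - x3) - (x6 - x5)),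
          sq_nonneg ((x4 - x3) - (x7 - x6)), sq_nonneg ((x5 - x4) - (x6 - x5)),
          sq_nonneg ((x5 - x4) - (x7 - x6)), sq_nonneg ((x6 - x5) - (x7 - x6))]
      have hblock : 2 ≤ 2 * ((3 : ℤ) - x10) ^ 2 + (2 * x9 - x10) ^ 2 + (2 * x11 - x10) ^ 2 := by
        rcases eq_or_ne x10 3 with rfl | hne
        · nlinarith [odd_sq13 (x9 - 1), odd_sq13 (x11 - 1)]
        · nlinarith [sq_pos13 (3 - x10) (by omega), sq_nonneg (2 * x9 - x10),
            sq_nonneg (2 * x11 - x10)]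
      nlinarith [hC, hblock, sq_nonneg (2 * x7 - 9), sq_nonneg (2 * x1 - x7)]
    · -- x8 ≥ 4
      have hC : x7 ^ 2 ≤ 6 * (x2 ^ 2 + (x2 - x3) ^ 2 + (x3 - x4) ^ 2 + (x4 - x5) ^ 2
          + (x5 - x6) ^ 2 + (x6 - x7) ^ 2) := by
        nlinarith [sq_nonneg (x2 - (x3 - x2)), sq_nonneg (x2 - (x4 - x3)),
          sq_nonneg (x2 - (x5 - x4)), sq_nonneg (x2 - (x6 - x5)), sq_nonneg (x2 - (x7 - x6)),
          sq_nonneg ((x3 - x2) - (x4 - x3)), sq_nonneg ((x3 - x2) - (x5 - x4)),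
          sq_nonneg ((x3 - x2) - (x6 - x5)), sq_nonneg ((x3 - x2) - (x7 - x6)),
          sq_nonneg ((x4 - x3) - (x5 - x4)), sq_nonneg ((x4 - x3) - (x6 - x5)),
          sq_nonneg ((x4 - x3) - (x7 - x6)), sq_nonneg ((x5 - x4) - (x6 - x5)),
          sq_nonneg ((x5 - x4) - (x7 - x6)), sq_nonneg ((x6 - x5) - (x7 - x6))]
      nlinarith [hC, sq_nonneg (2 * x7 - 3 * x8),
        mul_nonneg (show (0 : ℤ) ≤ x8 - 4 by omega) (show (0 : ℤ) ≤ x8 + 2 by omega),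
        sq_nonneg (2 * x1 - x7), sq_nonneg (x8 - x10), sq_nonneg (2 * x9 - x10),
        sq_nonneg (2 * x11 - x10)]
  have keyQ : ((2 * x8 + 4 : ℤ) : ℚ) ≤ (((2 * x1 - x7) ^ 2
      + 2 * (x2 ^ 2 + (x2 - x3) ^ 2 + (x3 - x4) ^ 2 + (x4 - x5) ^ 2
          + (x5 - x6) ^ 2 + (x6 - x7) ^ 2)
      + (x7 - 2 * x8) ^ 2 + 2 * (x8 - x10) ^ 2 + (2 * x9 - x10) ^ 2
      + (2 * x11 - x10) ^ 2 : ℤ) : ℚ) := by exact_mod_cast key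
  push_cast at keyQ ⊢
  linarith
end
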